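/- Let w1, w2 be even integers ≥ 2. For every P ∈ W_{w1,w2}^ℚ, the polynomial Q = ((1,1)+(S,S))·P = P + (S,S)·P satisfies ((1+S),1)·Q = 0, ((1+U+U²),1)·Q = 0, (1,(1+S))·Q = 0 and (1,(1+U+U²))·Q = 0; that is, Q lies in W_{w1}^ℚ ⊗ W_{w2}^ℚ, the space of polynomials annihilated by the one-variable Manin relations in each variable separately. -/

import Mathlib

open MvPolynomial

/-- `SL(2, ℤ)`. -/
abbrev SL2Z := Matrix.SpecialLinearGroup (Fin 2) ℤ

/-- `S = [[0,-1],[1,0]]`. -/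
def matS : SL2Z := ⟨!![0, -1; 1, 0], by norm_num [Matrix.det_fin_two_of]⟩

/-- `U = [[0,1],[-1,1]]`. -/
def matU : SL2Z := ⟨!![0, 1; -1, 1], by norm_num [Matrix.det_fin_two_of]⟩

/-- `T = [[1,1],[0,1]]`. -/
def matT : SL2Z := ⟨!![1, 1; 0, 1], by norm_num [Matrix.det_fin_two_of]⟩

/-- The weight-`w` action of `γ = [[a,b],[c,d]] ∈ SL(2,ℤ)` on a one-variable polynomial of
degree ≤ w : `(γ·Q)(X) = (-cX+a)^w Q((dX-b)/(-cX+a))`, written coefficientwise. -/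
noncomputable def polyAct1 {R : Type*} [CommRing R] (w : ℕ) (γ : SL2Z) (Q : Polynomial R) :
    Polynomial R :=
  ∑ m ∈ Finset.range (w + 1),
    Polynomial.C (Q.coeff m) *
      (Polynomial.C ((γ.1 1 1 : ℤ) : R) * Polynomial.X - Polynomial.C ((γ.1 0 1 : ℤ) : R)) ^ m *
      (Polynomial.C (-((γ.1 1 0 : ℤ) : R)) * Polynomial.X + Polynomial.C ((γ.1 0 0 : ℤ) : R)) ^
        (w - m)

/-- `((dX-b)^m) * ((-cX+a)^n)` for `γ = [[a,b],[c,d]]`, in the variable `x`. -/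
noncomputable def mfrac {R : Type*} [CommRing R] (γ : SL2Z) (x : MvPolynomial (Fin 2) R)
    (m n : ℕ) : MvPolynomial (Fin 2) R :=
  (MvPolynomial.C ((γ.1 1 1 : ℤ) : R) * x - MvPolynomial.C ((γ.1 0 1 : ℤ) : R)) ^ m *
    (MvPolynomial.C (-((γ.1 1 0 : ℤ) : R)) * x + MvPolynomial.C ((γ.1 0 0 : ℤ) : R)) ^ n

/-- The action of a pair `(γ1, γ2) ∈ SL(2,ℤ)²` on polynomials in `X1 = X 0`, `X2 = X 1` of
degree ≤ w1 in `X1` and ≤ w2 in `X2`: the weight-`w1` action on `X1` via `γ1` and the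
weight-`w2` action on `X2` via `γ2`. -/
noncomputable def polyAct2 {R : Type*} [CommRing R] (w1 w2 : ℕ) (γ1 γ2 : SL2Z)
    (P : MvPolynomial (Fin 2) R) : MvPolynomial (Fin 2) R :=
  ∑ m1 ∈ Finset.range (w1 + 1), ∑ m2 ∈ Finset.range (w2 + 1),
    MvPolynomial.C (MvPolynomial.coeff (Finsupp.single 0 m1 + Finsupp.single 1 m2) P) *
      mfrac γ1 (MvPolynomial.X 0) m1 (w1 - m1) * mfrac γ2 (MvPolynomial.X 1) m2 (w2 - m2)

/-- Membership in `V_w^ℚ` : degree at most `w`. -/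
def MemV1 (w : ℕ) (P : Polynomial ℚ) : Prop := P.natDegree ≤ w

/-- Membership in `W_w^ℚ = {P ∈ V_w^ℚ : (1+S)·P = 0, (1+U+U²)·P = 0}`. -/
def MemW1 (w : ℕ) (P : Polynomial ℚ) : Prop :=
  MemV1 w P ∧ P + polyAct1 w matS P = 0 ∧
    P + polyAct1 w matU P + polyAct1 w (matU ^ 2) P = 0

/-- Membership in `V_{w1,w2}^ℚ` : degree ≤ w1 in `X1 = X 0` and ≤ w2 in `X2 = X 1`. -/
def MemV2 (w1 w2 : ℕ) (P : MvPolynomial (Fin 2) ℚ) : Prop :=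
  MvPolynomial.degreeOf 0 P ≤ w1 ∧ MvPolynomial.degreeOf 1 P ≤ w2

/-- The embedding `P1(X) ↦ P1(X1)` of one-variable polynomials in the variable `X1 = X 0`. -/
noncomputable def toX1 (P1 : Polynomial ℚ) : MvPolynomial (Fin 2) ℚ :=
  Polynomial.aeval (MvPolynomial.X 0 : MvPolynomial (Fin 2) ℚ) P1


/-- The embedding `P2(X) ↦ P2(X2)` of one-variable polynomials in the variable `X2 = X 1`. -/
noncomputable def toX2 (P2 : Polynomial ℚ) : MvPolynomial (Fin 2) ℚ :=
  Polynomial.aeval (MvPolynomial.X 1 : MvPolynomial (Fin 2) ℚ) P2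

/-- Membership in `V_{w1,w2}^ℚ[I_D]` : lies in `V_{w1,w2}^ℚ` and is killed by
`(1,1)+(S,S)` and `(1,1)+(U,U)+(U²,U²)`. -/
def MemVID (w1 w2 : ℕ) (P : MvPolynomial (Fin 2) ℚ) : Prop :=
  MemV2 w1 w2 P ∧ P + polyAct2 w1 w2 matS matS P = 0 ∧
    P + polyAct2 w1 w2 matU matU P + polyAct2 w1 w2 (matU ^ 2) (matU ^ 2) P = 0

/-- Diagonal evaluation `P(X1,X2) ↦ P(Z,Z)`. -/
noncomputable def diagEval (P : MvPolynomial (Fin 2) ℚ) : Polynomial ℚ :=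
  MvPolynomial.aeval (fun _ : Fin 2 => (Polynomial.X : Polynomial ℚ)) P

/-- Membership in `W_{w1,w2}^ℚ` : lies in `V_{w1,w2}^ℚ` and is killed by the four Manin
relations of order 2 : `R1 = (1+S,1+S)`,
`R2 = (S,S)+(S,US)+(US,US)+(1,U)-(U²,U²)`, `R3 = (1+U+U²,1)((1,1)+(S,S))`,
`R4 = (1,1+U+U²)((1,1)+(S,S))`. -/
def MemW2 (w1 w2 : ℕ) (P : MvPolynomial (Fin 2) ℚ) : Prop :=
  MemV2 w1 w2 P ∧
  P + polyAct2 w1 w2 matS 1 P + polyAct2 w1 w2 1 matS P + polyAct2 w1 w2 matS matS P = 0 ∧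
  polyAct2 w1 w2 matS matS P + polyAct2 w1 w2 matS (matU * matS) P +
      polyAct2 w1 w2 (matU * matS) (matU * matS) P + polyAct2 w1 w2 1 matU P -
      polyAct2 w1 w2 (matU ^ 2) (matU ^ 2) P = 0 ∧
  P + polyAct2 w1 w2 matS matS P + polyAct2 w1 w2 matU 1 P +
      polyAct2 w1 w2 (matU * matS) matS P + polyAct2 w1 w2 (matU ^ 2) 1 P +
      polyAct2 w1 w2 (matU ^ 2 * matS) matS P = 0 ∧
  P + polyAct2 w1 w2 matS matS P + polyAct2 w1 w2 1 matU P +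
      polyAct2 w1 w2 matS (matU * matS) P + polyAct2 w1 w2 1 (matU ^ 2) P +
      polyAct2 w1 w2 matS (matU ^ 2 * matS) P = 0

/-!
On polynomials of degree `≤ w1` in `X1` and `≤ w2` in `X2`, `polyAct2 w1 w2 γ1 γ2` becomes, in the
fraction field, `Q ↦ (-c1 X1 + a1)^w1 (-c2 X2 + a2)^w2 Q(γ1⁻¹·X1, γ2⁻¹·X2)` with Möbius
transformations `γ⁻¹·x = (dx - b)/(-cx + a)`. The cocycle identity for the factors `-cx + a` then
makes `polyAct2` a left action of `SL(2,ℤ)²`, so `(S,1)·((1,1)+(S,S)) = (S,1) + (S²,S)`, and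
`S² = -1` acts trivially in even weight. Hence the four one-variable relations applied to
`((1,1)+(S,S))·P` are exactly `R1·P`, `R3·P`, `R1·P` and `R4·P`.
-/

section Mobius

variable {S : Type*} [CommRing S]

def mobiusNum (γ : SL2Z) (x : S) : S := (γ.1 1 1 : S) * x - (γ.1 0 1 : S)

def mobiusDen (γ : SL2Z) (x : S) : S := -(γ.1 1 0 : S) * x + (γ.1 0 0 : S)

lemma map_mobiusNum {T : Type*} [CommRing T] (f : S →+* T) (γ : SL2Z) (x : S) :
    f (mobiusNum γ x) = mobiusNum γ (f x) := by
  simp [mobiusNum]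

lemma map_mobiusDen {T : Type*} [CommRing T] (f : S →+* T) (γ : SL2Z) (x : S) :
    f (mobiusDen γ x) = mobiusDen γ (f x) := by
  simp [mobiusDen]

lemma mobiusNum_mul (γ δ : SL2Z) (x : S) :
    mobiusNum (γ * δ) x = (δ.1 1 1 : S) * mobiusNum γ x - (δ.1 0 1 : S) * mobiusDen γ x := by
  simp only [mobiusNum, mobiusDen, Matrix.SpecialLinearGroup.coe_mul, Matrix.mul_apply,
    Fin.sum_univ_two]
  push_cast
  ring

lemma mobiusDen_mul (γ δ : SL2Z) (x : S) :
    mobiusDen (γ * δ) x = -(δ.1 1 0 : S) * mobiusNum γ x + (δ.1 0 0 : S) * mobiusDen γ x := by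
  simp only [mobiusNum, mobiusDen, Matrix.SpecialLinearGroup.coe_mul, Matrix.mul_apply,
    Fin.sum_univ_two]
  push_cast
  ring

lemma mobiusNum_neg (γ : SL2Z) (x : S) : mobiusNum (-γ) x = -mobiusNum γ x := by
  simp only [mobiusNum, Matrix.SpecialLinearGroup.coe_neg, Matrix.neg_apply, Int.cast_neg]
  ring

lemma mobiusDen_neg (γ : SL2Z) (x : S) : mobiusDen (-γ) x = -mobiusDen γ x := by
  simp only [mobiusDen, Matrix.SpecialLinearGroup.coe_neg, Matrix.neg_apply, Int.cast_neg]
  ring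

lemma mobiusDen_pow_mul_mobius_div {K : Type*} [Field K] (γ δ : SL2Z) {x : K}
    (hx : mobiusDen γ x ≠ 0) (m n : ℕ) :
    mobiusDen γ x ^ (m + n) *
        (mobiusNum δ (mobiusNum γ x / mobiusDen γ x) ^ m *
          mobiusDen δ (mobiusNum γ x / mobiusDen γ x) ^ n) =
      mobiusNum (γ * δ) x ^ m * mobiusDen (γ * δ) x ^ n := by
  have hnum : mobiusDen γ x * mobiusNum δ (mobiusNum γ x / mobiusDen γ x) =
      mobiusNum (γ * δ) x := by
    rw [mobiusNum_mul, mobiusNum.eq_1 δ]; field_simp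
  have hden : mobiusDen γ x * mobiusDen δ (mobiusNum γ x / mobiusDen γ x) =
      mobiusDen (γ * δ) x := by
    rw [mobiusDen_mul, mobiusDen.eq_1 δ]; field_simp
  rw [← hnum, ← hden]
  ring

end Mobius

lemma mfrac_eq {R : Type*} [CommRing R] (γ : SL2Z) (x : MvPolynomial (Fin 2) R) (m n : ℕ) :
    mfrac γ x m n = mobiusNum γ x ^ m * mobiusDen γ x ^ n := by
  simp [mfrac, mobiusNum, mobiusDen]

lemma matS_sq : matS ^ 2 = -1 := by
  ext i j
  rw [sq, Matrix.SpecialLinearGroup.coe_mul]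
  fin_cases i <;> fin_cases j <;> simp [matS, Matrix.mul_apply]

section Action

variable {R : Type*} [CommRing R]

lemma polyAct2_add (w1 w2 : ℕ) (γ1 γ2 : SL2Z) (P Q : MvPolynomial (Fin 2) R) :
    polyAct2 w1 w2 γ1 γ2 (P + Q) = polyAct2 w1 w2 γ1 γ2 P + polyAct2 w1 w2 γ1 γ2 Q := by
  simp only [polyAct2, coeff_add, map_add, add_mul, Finset.sum_add_distrib]

lemma mfrac_neg_of_even (γ : SL2Z) (x : MvPolynomial (Fin 2) R) {m n : ℕ} (h : Even (m + n)) :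
    mfrac (-γ) x m n = mfrac γ x m n := by
  rw [mfrac_eq, mfrac_eq, mobiusNum_neg, mobiusDen_neg, neg_pow (mobiusNum γ x),
    neg_pow (mobiusDen γ x), mul_mul_mul_comm, ← pow_add, h.neg_one_pow, one_mul]

lemma polyAct2_neg_left {w1 : ℕ} (hw1 : Even w1) (w2 : ℕ) (γ1 γ2 : SL2Z)
    (P : MvPolynomial (Fin 2) R) :
    polyAct2 w1 w2 (-γ1) γ2 P = polyAct2 w1 w2 γ1 γ2 P := by
  refine Finset.sum_congr rfl fun m hm => Finset.sum_congr rfl fun _ _ => ?_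
  rw [mfrac_neg_of_even _ _ (by rwa [Nat.add_sub_cancel' (Finset.mem_range_succ_iff.mp hm)])]

lemma polyAct2_neg_right (w1 : ℕ) {w2 : ℕ} (hw2 : Even w2) (γ1 γ2 : SL2Z)
    (P : MvPolynomial (Fin 2) R) :
    polyAct2 w1 w2 γ1 (-γ2) P = polyAct2 w1 w2 γ1 γ2 P := by
  refine Finset.sum_congr rfl fun _ _ => Finset.sum_congr rfl fun m hm => ?_
  rw [mfrac_neg_of_even _ _ (by rwa [Nat.add_sub_cancel' (Finset.mem_range_succ_iff.mp hm)])]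

lemma degreeOf_intCast (i : Fin 2) (a : ℤ) : degreeOf i (a : MvPolynomial (Fin 2) R) = 0 := by
  rw [← map_intCast (C (σ := Fin 2) (R := R)), degreeOf_C]

lemma degreeOf_mobiusNum_le (i : Fin 2) (γ : SL2Z) (p : MvPolynomial (Fin 2) R) :
    degreeOf i (mobiusNum γ p) ≤ degreeOf i p := by
  refine (degreeOf_sub_le i _ _).trans (max_le ?_ ?_)
  · refine (degreeOf_mul_le i _ _).trans ?_
    rw [degreeOf_intCast, zero_add]
  · exact (degreeOf_intCast i _).trans_le (Nat.zero_le _)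

lemma degreeOf_mobiusDen_le (i : Fin 2) (γ : SL2Z) (p : MvPolynomial (Fin 2) R) :
    degreeOf i (mobiusDen γ p) ≤ degreeOf i p := by
  refine (degreeOf_add_le i _ _).trans (max_le ?_ ?_)
  · refine (degreeOf_mul_le i _ _).trans ?_
    rw [← Int.cast_neg, degreeOf_intCast, zero_add]
  · exact (degreeOf_intCast i _).trans_le (Nat.zero_le _)

lemma degreeOf_mfrac_le (i : Fin 2) (γ : SL2Z) (p : MvPolynomial (Fin 2) R) (m n : ℕ) :
    degreeOf i (mfrac γ p m n) ≤ (m + n) * degreeOf i p := by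
  rw [mfrac_eq, add_mul]
  refine (degreeOf_mul_le i _ _).trans (add_le_add ?_ ?_)
  · exact (degreeOf_pow_le i _ m).trans (Nat.mul_le_mul_left m (degreeOf_mobiusNum_le i γ p))
  · exact (degreeOf_pow_le i _ n).trans (Nat.mul_le_mul_left n (degreeOf_mobiusDen_le i γ p))

lemma degreeOf_polyAct2_le (i : Fin 2) (w1 w2 : ℕ) (γ1 γ2 : SL2Z) (P : MvPolynomial (Fin 2) R) :
    degreeOf i (polyAct2 w1 w2 γ1 γ2 P) ≤
      w1 * degreeOf i (X 0 : MvPolynomial (Fin 2) R) +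
        w2 * degreeOf i (X 1 : MvPolynomial (Fin 2) R) := by
  refine (degreeOf_sum_le i _ _).trans (Finset.sup_le fun m1 hm1 => ?_)
  refine (degreeOf_sum_le i _ _).trans (Finset.sup_le fun m2 hm2 => ?_)
  have h1 := degreeOf_mfrac_le i γ1 (X 0 : MvPolynomial (Fin 2) R) m1 (w1 - m1)
  have h2 := degreeOf_mfrac_le i γ2 (X 1 : MvPolynomial (Fin 2) R) m2 (w2 - m2)
  rw [Nat.add_sub_cancel' (Finset.mem_range_succ_iff.mp hm1)] at h1
  rw [Nat.add_sub_cancel' (Finset.mem_range_succ_iff.mp hm2)] at h2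
  exact (degreeOf_mul_le i _ _).trans (add_le_add ((degreeOf_C_mul_le _ i _).trans h1) h2)

end Action

lemma mobiusDen_X_ne_zero {R : Type*} [CommRing R] [Nontrivial R] (γ : SL2Z) (i : Fin 2) :
    mobiusDen γ (X i : MvPolynomial (Fin 2) R) ≠ 0 := by
  intro h
  have ha : (γ.1 0 0 : R) = 0 := by simpa [mobiusDen] using congrArg (eval 0) h
  have hc : (γ.1 1 0 : R) = 0 := by simpa [mobiusDen, ha] using congrArg (eval 1) h
  have hdet : ((γ.1 0 0 * γ.1 1 1 - γ.1 0 1 * γ.1 1 0 : ℤ) : R) = 1 := by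
    rw [← Matrix.det_fin_two, γ.2, Int.cast_one]
  simp [ha, hc] at hdet

lemma pow_mul_pow_sub_eq_pow_mul_div_pow {K : Type*} [Field K] (a : K) {b : K} (hb : b ≠ 0)
    {m w : ℕ} (h : m ≤ w) : a ^ m * b ^ (w - m) = b ^ w * (a / b) ^ m := by
  rw [pow_sub₀ _ hb h, div_pow]
  ring

lemma Finsupp.single_zero_add_single_one {M : Type*} [AddZeroClass M] (d : Fin 2 →₀ M) :
    Finsupp.single 0 (d 0) + Finsupp.single 1 (d 1) = d := by
  ext j
  fin_cases j <;> simp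

section Evaluation

variable {R K : Type*} [CommRing R] [Field K]

def mobiusPoint (γ : Fin 2 → SL2Z) (x : Fin 2 → K) : Fin 2 → K :=
  fun i => mobiusNum (γ i) (x i) / mobiusDen (γ i) (x i)

lemma map_mfrac_eq_mobiusDen_pow_mul (f : MvPolynomial (Fin 2) R →+* K) (γ : SL2Z)
    {x : MvPolynomial (Fin 2) R} (hx : mobiusDen γ (f x) ≠ 0) {m w : ℕ} (h : m ≤ w) :
    f (mfrac γ x m (w - m)) =
      mobiusDen γ (f x) ^ w * (mobiusNum γ (f x) / mobiusDen γ (f x)) ^ m := by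
  rw [mfrac_eq, map_mul, map_pow, map_pow, map_mobiusNum, map_mobiusDen,
    pow_mul_pow_sub_eq_pow_mul_div_pow _ hx h]

lemma map_polyAct2 (f : MvPolynomial (Fin 2) R →+* K) {w1 w2 : ℕ} (γ1 γ2 : SL2Z)
    (hx : ∀ i, mobiusDen (![γ1, γ2] i) (f (X i)) ≠ 0) {Q : MvPolynomial (Fin 2) R}
    (hQ1 : degreeOf 0 Q ≤ w1) (hQ2 : degreeOf 1 Q ≤ w2) :
    f (polyAct2 w1 w2 γ1 γ2 Q) =
      mobiusDen γ1 (f (X 0)) ^ w1 * mobiusDen γ2 (f (X 1)) ^ w2 *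
        eval₂ (f.comp C) (mobiusPoint ![γ1, γ2] (fun i => f (X i))) Q := by
  rw [eval₂_eq', Finset.mul_sum, polyAct2, map_sum]
  simp only [map_sum]
  rw [← Finset.sum_product']
  symm
  refine Finset.sum_of_injOn (fun d => (d 0, d 1)) ?_ ?_ ?_ ?_
  · intro d _ d' _ h
    simp only [Prod.mk.injEq] at h
    ext j
    fin_cases j
    exacts [h.1, h.2]
  · intro d hd
    simp only [Finset.coe_product, Set.mem_prod, Finset.coe_range, Set.mem_Iio, Nat.lt_succ_iff]
    exact ⟨(monomial_le_degreeOf 0 hd).trans hQ1, (monomial_le_degreeOf 1 hd).trans hQ2⟩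
  · rintro ⟨m1, m2⟩ - hm
    have hcoeff : coeff (Finsupp.single 0 m1 + Finsupp.single 1 m2) Q = 0 := by
      by_contra hne
      exact hm ⟨_, mem_support_iff.mpr hne, by simp⟩
    simp [hcoeff]
  · intro d hd
    have h1 := (monomial_le_degreeOf 0 hd).trans hQ1
    have h2 := (monomial_le_degreeOf 1 hd).trans hQ2
    rw [Finsupp.single_zero_add_single_one, map_mul, map_mul, map_mfrac_eq_mobiusDen_pow_mul f γ1
      (hx 0) h1, map_mfrac_eq_mobiusDen_pow_mul f γ2 (hx 1) h2, Fin.prod_univ_two]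
    simp only [mobiusPoint, RingHom.comp_apply, Matrix.cons_val_zero, Matrix.cons_val_one]
    ring

end Evaluation

lemma mobiusDen_pow_mul_map_mfrac {R K : Type*} [CommRing R] [Field K]
    (f g : MvPolynomial (Fin 2) R →+* K) (γ δ : SL2Z) {x : MvPolynomial (Fin 2) R}
    (hx : mobiusDen γ (f x) ≠ 0) (hg : g x = mobiusNum γ (f x) / mobiusDen γ (f x)) (m n : ℕ) :
    mobiusDen γ (f x) ^ (m + n) * g (mfrac δ x m n) = f (mfrac (γ * δ) x m n) := by
  rw [mfrac_eq, mfrac_eq, map_mul, map_mul, map_pow, map_pow, map_pow, map_pow, map_mobiusNum,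
    map_mobiusDen, map_mobiusNum, map_mobiusDen, hg, mobiusDen_pow_mul_mobius_div γ δ hx]

theorem polyAct2_mul {R : Type*} [CommRing R] [IsDomain R] (w1 w2 : ℕ) (γ1 γ2 δ1 δ2 : SL2Z)
    (P : MvPolynomial (Fin 2) R) :
    polyAct2 w1 w2 γ1 γ2 (polyAct2 w1 w2 δ1 δ2 P) = polyAct2 w1 w2 (γ1 * δ1) (γ2 * δ2) P := by
  set f := algebraMap (MvPolynomial (Fin 2) R) (FractionRing (MvPolynomial (Fin 2) R))
  have hf : Function.Injective f := IsFractionRing.injective _ _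
  have hx : ∀ (γ : SL2Z) i, mobiusDen γ (f (X i)) ≠ 0 := fun γ i => by
    rw [← map_mobiusDen]
    exact (map_ne_zero_iff f hf).mpr (mobiusDen_X_ne_zero γ i)
  have hdeg0 : degreeOf 0 (polyAct2 w1 w2 δ1 δ2 P) ≤ w1 := by
    simpa [degreeOf_X] using degreeOf_polyAct2_le 0 w1 w2 δ1 δ2 P
  have hdeg1 : degreeOf 1 (polyAct2 w1 w2 δ1 δ2 P) ≤ w2 := by
    simpa [degreeOf_X] using degreeOf_polyAct2_le 1 w1 w2 δ1 δ2 P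
  set g := eval₂Hom (f.comp C) (mobiusPoint ![γ1, γ2] (fun i => f (X i)))
  apply hf
  rw [map_polyAct2 f γ1 γ2 (fun i => hx _ i) hdeg0 hdeg1, ← coe_eval₂Hom, polyAct2, polyAct2,
    map_sum, map_sum, Finset.mul_sum]
  refine Finset.sum_congr rfl fun m1 hm1 => ?_
  rw [map_sum, map_sum, Finset.mul_sum]
  refine Finset.sum_congr rfl fun m2 hm2 => ?_
  have e1 := mobiusDen_pow_mul_map_mfrac f g γ1 δ1 (hx γ1 0)
    (by simp [g, mobiusPoint]) m1 (w1 - m1)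
  have e2 := mobiusDen_pow_mul_map_mfrac f g γ2 δ2 (hx γ2 1)
    (by simp [g, mobiusPoint]) m2 (w2 - m2)
  rw [Nat.add_sub_cancel' (Finset.mem_range_succ_iff.mp hm1)] at e1
  rw [Nat.add_sub_cancel' (Finset.mem_range_succ_iff.mp hm2)] at e2
  rw [map_mul, map_mul, map_mul, map_mul, ← e1, ← e2, eval₂Hom_C, RingHom.comp_apply]
  ring

theorem one_plus_SS_maps_W2_to_W_tensor_W_general (w1 w2 : ℕ) (hw1 : Even w1) (hw2 : Even w2)
    (P : MvPolynomial (Fin 2) ℚ) (hP : MemW2 w1 w2 P) :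
    (P + polyAct2 w1 w2 matS matS P) +
        polyAct2 w1 w2 matS 1 (P + polyAct2 w1 w2 matS matS P) = 0 ∧
    (P + polyAct2 w1 w2 matS matS P) +
        polyAct2 w1 w2 matU 1 (P + polyAct2 w1 w2 matS matS P) +
        polyAct2 w1 w2 (matU ^ 2) 1 (P + polyAct2 w1 w2 matS matS P) = 0 ∧
    (P + polyAct2 w1 w2 matS matS P) +
        polyAct2 w1 w2 1 matS (P + polyAct2 w1 w2 matS matS P) = 0 ∧
    (P + polyAct2 w1 w2 matS matS P) +
        polyAct2 w1 w2 1 matU (P + polyAct2 w1 w2 matS matS P) +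
        polyAct2 w1 w2 1 (matU ^ 2) (P + polyAct2 w1 w2 matS matS P) = 0 := by
  obtain ⟨-, hR1, -, hR3, hR4⟩ := hP
  refine ⟨?_, ?_, ?_, ?_⟩
  · rw [polyAct2_add, polyAct2_mul, one_mul, ← sq, matS_sq, polyAct2_neg_left hw1]
    linear_combination hR1
  · rw [polyAct2_add, polyAct2_add, polyAct2_mul, polyAct2_mul, one_mul]
    linear_combination hR3
  · rw [polyAct2_add, polyAct2_mul, one_mul, ← sq, matS_sq, polyAct2_neg_right w1 hw2]
    linear_combination hR1
  · rw [polyAct2_add, polyAct2_add, polyAct2_mul, polyAct2_mul, one_mul]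
    linear_combination hR4

/-- For `P ∈ W_{w1,w2}^ℚ`, the polynomial `Q = ((1,1)+(S,S))·P` is annihilated by the
one-variable Manin relations in each variable separately, i.e. lies in `W_{w1}^ℚ ⊗ W_{w2}^ℚ`. -/
theorem one_plus_SS_maps_W2_to_W_tensor_W (w1 w2 : ℕ) (hw1 : Even w1) (hw2 : Even w2)
    (hw1' : 2 ≤ w1) (hw2' : 2 ≤ w2) (P : MvPolynomial (Fin 2) ℚ) (hP : MemW2 w1 w2 P) :
    (P + polyAct2 w1 w2 matS matS P) +
        polyAct2 w1 w2 matS 1 (P + polyAct2 w1 w2 matS matS P) = 0 ∧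
    (P + polyAct2 w1 w2 matS matS P) +
        polyAct2 w1 w2 matU 1 (P + polyAct2 w1 w2 matS matS P) +
        polyAct2 w1 w2 (matU ^ 2) 1 (P + polyAct2 w1 w2 matS matS P) = 0 ∧
    (P + polyAct2 w1 w2 matS matS P) +
        polyAct2 w1 w2 1 matS (P + polyAct2 w1 w2 matS matS P) = 0 ∧
    (P + polyAct2 w1 w2 matS matS P) +
        polyAct2 w1 w2 1 matU (P + polyAct2 w1 w2 matS matS P) +
        polyAct2 w1 w2 1 (matU ^ 2) (P + polyAct2 w1 w2 matS matS P) = 0 :=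
  one_plus_SS_maps_W2_to_W_tensor_W_general w1 w2 hw1 hw2 P hP
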